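/- Let 0 < μ < L, Q = L/μ > 1, α = 1/L, β = (√Q − 1)/(√Q + 1), and r = (√Q − 1)/√Q. Then for every integer k ≥ 1, B(L) B(μ)^k B(L) = −r^{k+1} · k · B(L), where B(L) = [[0, β²], [−1, β]] and B(μ) = [[1 − α(1+β)μ, β²], [−αμ, β]]. -/
import Mathlib


open Matrix

/-- The 2×2 matrix `B(λ)` from the analysis of Nesterov's method; with `α = 1/L` the
matrix `B(L)` has top-left entry `1 − α(1+β)L = −β`. -/
noncomputable def Bmat (α β lam : ℝ) : Matrix (Fin 2) (Fin 2) ℝ :=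
  !![1 - α * (1 + β) * lam, β ^ 2; -(α * lam), β]

/-- With `α = 1/L`, `β = (√Q−1)/(√Q+1)`, `r = (√Q−1)/√Q`, for every
integer `k ≥ 1`: `B(L) B(μ)^k B(L) = −r^{k+1} · k · B(L)`. -/
theorem stmt18 (μ L : ℝ) (hμ : 0 < μ) (hμL : μ < L)
    (Q : ℝ) (hQ : Q = L / μ) (hQ1 : 1 < Q)
    (α β r : ℝ) (hα : α = 1 / L) (hβ : β = (Real.sqrt Q - 1) / (Real.sqrt Q + 1))
    (hr : r = (Real.sqrt Q - 1) / Real.sqrt Q) :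
    ∀ k : ℕ, 1 ≤ k →
      Bmat α β L * (Bmat α β μ) ^ k * Bmat α β L
        = (-(r ^ (k + 1) * (k : ℝ))) • Bmat α β L := by
  have hL : 0 < L := hμ.trans hμL
  set s := Real.sqrt Q with hs
  have hQ0 : 0 < Q := lt_trans one_pos hQ1
  have hs1 : 1 < s := by
    rw [show (1:ℝ) = Real.sqrt 1 by simp]
    exact Real.sqrt_lt_sqrt (by norm_num) hQ1
  have hs0 : 0 < s := lt_trans one_pos hs1
  have hsq : s * s = Q := Real.mul_self_sqrt hQ0.le
  have hsne : s ≠ 0 := ne_of_gt hs0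
  have hs1ne : s + 1 ≠ 0 := by positivity
  -- concrete forms of the matrices
  have hBL : Bmat α β L = !![-β, β^2; -1, β] := by
    unfold Bmat
    rw [hα]
    ext i j
    fin_cases i <;> fin_cases j <;> simp <;> field_simp <;> ring
  have hμ' : α * μ = 1 / (s * s) := by
    rw [hsq, hQ, hα]
    field_simp
  set a : ℝ := 1 - (1 + β) / (s * s) with ha
  set c : ℝ := -(1 / (s * s)) with hc
  have hBμ : Bmat α β μ = !![a, β^2; c, β] := by
    unfold Bmat
    rw [show α * (1 + β) * μ = (1 + β) * (α * μ) by ring, hμ', ha, hc]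
    ext i j
    fin_cases i <;> fin_cases j <;> simp <;> ring
  set BL : Matrix (Fin 2) (Fin 2) ℝ := !![-β, β^2; -1, β] with hBLdef
  set Bμ : Matrix (Fin 2) (Fin 2) ℝ := !![a, β^2; c, β] with hBμdef
  -- scalar identities
  have htr : a + β = 2 * r := by
    rw [ha, hβ, hr]
    field_simp
    ring
  have hdet : a * β - β^2 * c = r^2 := by
    rw [ha, hc, hβ, hr]
    field_simp
    ring
  have hkey : -(a * β + β^2) + β * (c * β + β) = -(r^2) := by
    rw [ha, hc, hβ, hr]
    field_simp
    ring
  -- matrix identities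
  have h1 : BL * BL = 0 := by
    rw [hBLdef]
    ext i j
    fin_cases i <;> fin_cases j <;>
      simp [Matrix.mul_apply, Fin.sum_univ_two] <;> ring
  have h2 : Bμ * Bμ = (2*r) • Bμ - (r^2) • (1 : Matrix (Fin 2) (Fin 2) ℝ) := by
    rw [hBμdef]
    ext i j
    fin_cases i <;> fin_cases j <;>
      simp [Matrix.mul_apply, Fin.sum_univ_two, Matrix.one_apply]
    · linear_combination a * htr - hdet
    · linear_combination β^2 * htr
    · linear_combination c * htr
    · linear_combination β * htr - hdet
  have h3 : BL * Bμ * BL = (-(r^2)) • BL := by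
    rw [hBLdef, hBμdef]
    ext i j
    fin_cases i <;> fin_cases j <;>
      simp [Matrix.mul_apply, Fin.sum_univ_two]
    · linear_combination (-β) * hkey
    · linear_combination (β^2) * hkey
    · linear_combination (-1 : ℝ) * hkey
    · linear_combination β * hkey
  -- power formula
  have h4 : ∀ m : ℕ, Bμ ^ (m+1)
      = (((m:ℝ)+1) * r^m) • Bμ - ((m:ℝ) * r^(m+1)) • (1 : Matrix (Fin 2) (Fin 2) ℝ) := by
    intro m
    induction m with
    | zero => simp
    | succ n ih =>
      rw [pow_succ, ih, Matrix.sub_mul, Matrix.smul_mul, Matrix.smul_mul, h2, Matrix.one_mul]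
      push_cast
      module
  intro k hk
  obtain ⟨m, rfl⟩ := Nat.exists_eq_add_of_le hk
  rw [hBL, hBμ, Nat.add_comm 1 m, h4]
  have e1 : BL * ((((m:ℝ)+1) * r^m) • Bμ - ((m:ℝ) * r^(m+1)) • (1 : Matrix (Fin 2) (Fin 2) ℝ)) * BL
      = (((m:ℝ)+1) * r^m) • (BL * Bμ * BL) - ((m:ℝ) * r^(m+1)) • (BL * BL) := by
    rw [Matrix.mul_sub, Matrix.sub_mul, Matrix.mul_smul BL, Matrix.smul_mul,
      Matrix.mul_smul BL, Matrix.smul_mul, Matrix.mul_one]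
  rw [e1, h3, h1, smul_smul, smul_zero, sub_zero]
  push_cast
  congr 1
  ring
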